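/- arXiv:2402.07115 — 3 statements merged into one kernel-verified Lean document; each statement's English description precedes it below -/
import Mathlib

section
/- For every integer m ≥ 0, one has |c_{2m+1}| ≤ (π/6 + 12/π) · (1/(4√6)) · |c_{2m}|; in particular |c_{2m+1}| < |c_{2m}|. -/
/-! Write `c m = (-1)^m (4√6)^{-m} · cSum (π/6) m`, a sum of nonnegative terms `cSummand x m k`.
Going from `2m` to `2m + 1` multiplies each term with `k ≤ m` by at most `x` (the ratio is
`x · (2m+2) / ((2m+1-k)(2m+2-2k))`) and adds a single new term, exactly `2/x` times the term
`k = m` of `cSum x (2m)`. Hence `cSum x (2m+1) ≤ (x + 2/x) · cSum x (2m)`, and for `x = π/6`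
one has `x + 2/x = π/6 + 12/π < 5 < 8 ≤ 4√6`. -/

open Real Finset Filter Topology

noncomputable def c (m : ℕ) : ℝ :=
  ((-1 : ℝ) ^ m / (4 * Real.sqrt 6) ^ m) *
    ∑ k ∈ Finset.range ((m + 1) / 2 + 1),
      ((m + 1).choose k : ℝ) * ((m + 1 - k : ℕ) : ℝ) / ((m + 1 - 2 * k).factorial : ℝ) *
        (π / 6) ^ ((m : ℤ) - 2 * k)

noncomputable def cSummand (x : ℝ) (n k : ℕ) : ℝ :=
  ((n + 1).choose k : ℝ) * ((n + 1 - k : ℕ) : ℝ) / ((n + 1 - 2 * k).factorial : ℝ) *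
    x ^ ((n : ℤ) - 2 * k)

noncomputable def cSum (x : ℝ) (n : ℕ) : ℝ :=
  ∑ k ∈ range ((n + 1) / 2 + 1), cSummand x n k

section

variable {x : ℝ}

lemma cSummand_nonneg (hx : 0 ≤ x) (n k : ℕ) : 0 ≤ cSummand x n k := by
  unfold cSummand
  have := zpow_nonneg hx ((n : ℤ) - 2 * k)
  positivity

lemma cSummand_zero_pos (hx : 0 < x) (n : ℕ) : 0 < cSummand x n 0 := by
  simp only [cSummand, Nat.choose_zero_right, Nat.sub_zero, mul_zero, Nat.cast_zero]
  have := zpow_pos hx (n : ℤ)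
  positivity

lemma cSum_pos (hx : 0 < x) (n : ℕ) : 0 < cSum x n :=
  sum_pos' (fun k _ => cSummand_nonneg hx.le n k)
    ⟨0, mem_range.2 (Nat.succ_pos _), cSummand_zero_pos hx n⟩

lemma cSummand_two_mul_add (x : ℝ) (k j : ℕ) :
    cSummand x (2 * k + j) k =
      (2 * k + j + 1).choose k * (k + j + 1) / (j + 1).factorial * x ^ j := by
  rw [cSummand, show 2 * k + j + 1 - k = k + j + 1 by omega,
    show 2 * k + j + 1 - 2 * k = j + 1 by omega,
    show ((2 * k + j : ℕ) : ℤ) - 2 * k = j by push_cast; ring, zpow_natCast]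
  push_cast
  ring

lemma cSummand_succ_le (hx : 0 ≤ x) {n k : ℕ} (hk : 2 * k ≤ n) :
    cSummand x (n + 1) k ≤ x * cSummand x n k := by
  obtain ⟨j, rfl⟩ := Nat.exists_eq_add_of_le hk
  have hchoose : ((2 * k + j + 2).choose k : ℝ) * (k + j + 2) =
      ((2 * k + j + 1).choose k : ℝ) * (2 * k + j + 2) := by
    have := Nat.choose_mul_succ_eq (2 * k + j + 1) k
    rw [show 2 * k + j + 1 + 1 - k = k + j + 2 by omega] at this
    exact_mod_cast this.symm
  have hratio : ((2 * k + j + 2 : ℝ)) / (j + 2) ≤ k + j + 1 := by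
    rw [div_le_iff₀ (by positivity)]
    nlinarith
  rw [add_assoc, cSummand_two_mul_add, cSummand_two_mul_add, Nat.factorial_succ (j + 1)]
  push_cast
  calc ((2 * k + (j + 1) + 1).choose k : ℝ) * (k + (j + 1) + 1) /
          ((j + 1 + 1) * (j + 1).factorial) * x ^ (j + 1)
      = (2 * k + j + 1).choose k / (j + 1).factorial * x ^ (j + 1) * ((2 * k + j + 2) / (j + 2)) := by
        rw [show 2 * k + (j + 1) + 1 = 2 * k + j + 2 by ring,
          show (k : ℝ) + (j + 1) + 1 = k + j + 2 by ring, hchoose]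
        field_simp
        ring
    _ ≤ (2 * k + j + 1).choose k / (j + 1).factorial * x ^ (j + 1) * (k + j + 1) := by
        gcongr
    _ = x * ((2 * k + j + 1).choose k * (k + j + 1) / (j + 1).factorial * x ^ j) := by ring

lemma cSummand_two_mul_add_one_last (x : ℝ) (m : ℕ) :
    cSummand x (2 * m + 1) (m + 1) = 2 / x * cSummand x (2 * m) m := by
  have hchoose : (2 * m + 2).choose (m + 1) = 2 * (2 * m + 1).choose m := by
    rw [Nat.choose_succ_succ', Nat.choose_symm_half]
    ring
  simp only [cSummand]
  rw [show 2 * m + 1 + 1 - (m + 1) = m + 1 by omega,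
    show 2 * m + 1 + 1 - 2 * (m + 1) = 0 by omega,
    show 2 * m + 1 - m = m + 1 by omega, show 2 * m + 1 - 2 * m = 1 by omega, hchoose,
    show ((2 * m + 1 : ℕ) : ℤ) - 2 * ((m + 1 : ℕ) : ℤ) = -1 by push_cast; ring,
    show ((2 * m : ℕ) : ℤ) - 2 * (m : ℤ) = 0 by push_cast; ring]
  simp only [zpow_neg_one, zpow_zero, Nat.factorial_zero, Nat.factorial_one]
  push_cast
  ring

lemma cSum_two_mul_add_one_le (hx : 0 ≤ x) (m : ℕ) :
    cSum x (2 * m + 1) ≤ (x + 2 / x) * cSum x (2 * m) := by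
  have hsum : ∑ k ∈ range (m + 1), cSummand x (2 * m + 1) k ≤ x * cSum x (2 * m) := by
    rw [cSum, show (2 * m + 1) / 2 + 1 = m + 1 by omega, mul_sum]
    exact sum_le_sum fun k hk => cSummand_succ_le hx (by have := mem_range.1 hk; omega)
  have hlast : cSummand x (2 * m) m ≤ cSum x (2 * m) := by
    rw [cSum, show (2 * m + 1) / 2 + 1 = m + 1 by omega]
    exact single_le_sum (f := cSummand x (2 * m)) (fun k _ => cSummand_nonneg hx _ k)
      (self_mem_range_succ m)
  calc cSum x (2 * m + 1)
      = ∑ k ∈ range (m + 1), cSummand x (2 * m + 1) k + 2 / x * cSummand x (2 * m) m := by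
        rw [cSum, show (2 * m + 1 + 1) / 2 + 1 = m + 1 + 1 by omega, sum_range_succ,
          cSummand_two_mul_add_one_last]
    _ ≤ x * cSum x (2 * m) + 2 / x * cSum x (2 * m) := by gcongr
    _ = (x + 2 / x) * cSum x (2 * m) := by ring

end

lemma c_eq (n : ℕ) : c n = (-1) ^ n / (4 * √6) ^ n * cSum (π / 6) n := rfl

lemma abs_c_eq (n : ℕ) : |c n| = cSum (π / 6) n / (4 * √6) ^ n := by
  rw [c_eq, abs_mul, abs_div, abs_pow, abs_pow, abs_neg, abs_one, one_pow,
    abs_of_pos (by positivity : (0 : ℝ) < 4 * √6), abs_of_pos (cSum_pos (by positivity) n)]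
  ring

lemma pi_div_six_add_twelve_div_pi_mul_lt_one : (π / 6 + 12 / π) * (1 / (4 * √6)) < 1 := by
  have h12 : 12 / π < 4 := by
    rw [div_lt_iff₀ pi_pos]
    linarith [pi_gt_three]
  have hsqrt : (2 : ℝ) ≤ √6 := Real.le_sqrt_of_sq_le (by norm_num)
  rw [mul_one_div, div_lt_one (by positivity)]
  linarith [pi_lt_d2]

theorem stmt1 (m : ℕ) :
    |c (2 * m + 1)| ≤ (π / 6 + 12 / π) * (1 / (4 * Real.sqrt 6)) * |c (2 * m)| ∧
      |c (2 * m + 1)| < |c (2 * m)| := by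
  have hle : |c (2 * m + 1)| ≤ (π / 6 + 12 / π) * (1 / (4 * √6)) * |c (2 * m)| := by
    rw [abs_c_eq, abs_c_eq, pow_succ, div_le_iff₀ (by positivity)]
    calc cSum (π / 6) (2 * m + 1) ≤ (π / 6 + 2 / (π / 6)) * cSum (π / 6) (2 * m) :=
          cSum_two_mul_add_one_le (by positivity) m
      _ = _ := by field_simp; ring
  have hpos : 0 < |c (2 * m)| := by
    rw [abs_c_eq]
    exact div_pos (cSum_pos (by positivity) _) (by positivity)
  exact ⟨hle, hle.trans_lt (mul_lt_of_lt_one_left hpos pi_div_six_add_twelve_div_pi_mul_lt_one)⟩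
end

section
/- The sequence (|c_m|)_{m≥0} is strictly monotonically decreasing, i.e. |c_{m+1}| < |c_m| for every integer m ≥ 0. -/
open Real Finset Filter Topology

noncomputable def Tm (m k : ℕ) : ℝ :=
  ((m + 1).choose k : ℝ) * ((m + 1 - k : ℕ) : ℝ) / ((m + 1 - 2 * k).factorial : ℝ) *
    (π / 6) ^ ((m : ℤ) - 2 * k)

noncomputable def Sm (m : ℕ) : ℝ := ∑ k ∈ Finset.range ((m + 1) / 2 + 1), Tm m k

lemma pi6_pos : (0 : ℝ) < π / 6 := by
  have := Real.pi_pos; linarith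

lemma Tm_pos (m k : ℕ) (hk : k ≤ m) : 0 < Tm m k := by
  have h2 : 0 < (m + 1).choose k := Nat.choose_pos (by omega)
  have h3 : 0 < m + 1 - k := by omega
  have h2' : (0 : ℝ) < ((m + 1).choose k : ℝ) := by exact_mod_cast h2
  have h3' : (0 : ℝ) < ((m + 1 - k : ℕ) : ℝ) := by exact_mod_cast h3
  have h4 : (0 : ℝ) < ((m + 1 - 2 * k).factorial : ℝ) := by
    exact_mod_cast (m + 1 - 2 * k).factorial_pos
  have h5 : (0 : ℝ) < (π / 6) ^ ((m : ℤ) - 2 * k) := zpow_pos pi6_pos _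
  unfold Tm
  positivity

lemma Sm_pos (m : ℕ) : 0 < Sm m := by
  unfold Sm
  apply Finset.sum_pos
  · intro k hk
    simp only [Finset.mem_range] at hk
    exact Tm_pos m k (by omega)
  · exact ⟨0, by simp⟩

lemma Tm_step (m k : ℕ) (hk : k ≤ (m + 1) / 2) : Tm (m + 1) k ≤ 4 * Tm m k := by
  have hπ := Real.pi_pos
  have hπ6 : π ≤ 6 := le_trans Real.pi_le_four (by norm_num)
  have hch : ((m + 2).choose k : ℝ) ≤ 2 * ((m + 1).choose k : ℝ) := by
    have h : (m + 2).choose k ≤ 2 * (m + 1).choose k := by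
      rcases Nat.eq_zero_or_pos k with h0 | h0
      · subst h0; simp
      · obtain ⟨l, rfl⟩ := Nat.exists_eq_succ_of_ne_zero h0.ne'
        have heq : (m + 2).choose (l + 1) = (m + 1).choose l + (m + 1).choose (l + 1) :=
          Nat.choose_succ_succ (m + 1) l
        have hle : (m + 1).choose l ≤ (m + 1).choose (l + 1) :=
          Nat.choose_le_succ_of_lt_half_left (by omega)
        show (m + 2).choose (l + 1) ≤ 2 * (m + 1).choose (l + 1)
        omega
    exact_mod_cast h
  have hsub : ((m + 2 - k : ℕ) : ℝ) ≤ 2 * ((m + 1 - k : ℕ) : ℝ) := by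
    have h : (m + 2 - k : ℕ) ≤ 2 * (m + 1 - k) := by omega
    exact_mod_cast h
  have hfac : ((m + 1 - 2 * k).factorial : ℝ) ≤ ((m + 2 - 2 * k).factorial : ℝ) := by
    exact_mod_cast Nat.factorial_le (by omega)
  have hfacpos : (0 : ℝ) < ((m + 1 - 2 * k).factorial : ℝ) := by
    exact_mod_cast (m + 1 - 2 * k).factorial_pos
  have hz : (π / 6 : ℝ) ^ (((m + 1 : ℕ) : ℤ) - 2 * k) =
      (π / 6) * (π / 6) ^ ((m : ℤ) - 2 * k) := by
    have h1 : ((m + 1 : ℕ) : ℤ) - 2 * k = 1 + ((m : ℤ) - 2 * k) := by push_cast; ring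
    rw [h1, zpow_add₀ (ne_of_gt pi6_pos), zpow_one]
  have hPpos : (0 : ℝ) < (π / 6) ^ ((m : ℤ) - 2 * k) := zpow_pos pi6_pos _
  have hπ61 : (π / 6 : ℝ) ≤ 1 := by linarith
  unfold Tm
  rw [show m + 1 + 1 = m + 2 from rfl, hz]
  calc ((m + 2).choose k : ℝ) * ((m + 2 - k : ℕ) : ℝ) / ((m + 2 - 2 * k).factorial : ℝ) *
        ((π / 6) * (π / 6) ^ ((m : ℤ) - 2 * k))
      ≤ (2 * ((m + 1).choose k : ℝ)) * (2 * ((m + 1 - k : ℕ) : ℝ)) /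
          ((m + 1 - 2 * k).factorial : ℝ) * (1 * (π / 6) ^ ((m : ℤ) - 2 * k)) := by
        gcongr
    _ = 4 * (((m + 1).choose k : ℝ) * ((m + 1 - k : ℕ) : ℝ) /
          ((m + 1 - 2 * k).factorial : ℝ) * (π / 6) ^ ((m : ℤ) - 2 * k)) := by ring

lemma Tm_extra (j : ℕ) : Tm (2 * j + 1) (j + 1) ≤ 4 * Tm (2 * j) j := by
  have hπ3 := Real.pi_gt_three
  have hπ6 : π ≤ 6 := le_trans Real.pi_le_four (by norm_num)
  have hcc : (2 * j + 2).choose (j + 1) = 2 * ((2 * j + 1).choose j) := by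
    have heq : (2 * j + 2).choose (j + 1) =
        (2 * j + 1).choose j + (2 * j + 1).choose (j + 1) :=
      Nat.choose_succ_succ (2 * j + 1) j
    have hsym : (2 * j + 1).choose (j + 1) = (2 * j + 1).choose j := by
      have := Nat.choose_symm (show j + 1 ≤ 2 * j + 1 by omega)
      rw [show 2 * j + 1 - (j + 1) = j from by omega] at this
      omega
    omega
  have h1 : Tm (2 * j + 1) (j + 1) =
      2 * ((2 * j + 1).choose j : ℝ) * ((j + 1 : ℕ) : ℝ) * (π / 6) ^ (-1 : ℤ) := by
    unfold Tm
    rw [show 2 * j + 1 + 1 = 2 * j + 2 from rfl,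
      show 2 * j + 2 - (j + 1) = j + 1 from by omega,
      show 2 * j + 2 - 2 * (j + 1) = 0 from by omega,
      show ((2 * j + 1 : ℕ) : ℤ) - 2 * (j + 1 : ℕ) = -1 from by push_cast; ring, hcc]
    push_cast
    simp [Nat.factorial]
  have h2 : Tm (2 * j) j = ((2 * j + 1).choose j : ℝ) * ((j + 1 : ℕ) : ℝ) := by
    unfold Tm
    rw [show 2 * j + 1 - j = j + 1 from by omega,
      show 2 * j + 1 - 2 * j = 1 from by omega,
      show ((2 * j : ℕ) : ℤ) - 2 * (j : ℕ) = 0 from by push_cast; ring]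
    simp [Nat.factorial]
  rw [h1, h2]
  have hzp : (π / 6 : ℝ) ^ (-1 : ℤ) = 6 / π := by
    rw [zpow_neg, zpow_one]
    field_simp
  rw [hzp]
  have hle : (6 / π : ℝ) ≤ 2 := by
    rw [div_le_iff₀ (by linarith)]
    linarith
  have hc0 : (0 : ℝ) ≤ ((2 * j + 1).choose j : ℝ) := by positivity
  have hj0 : (0 : ℝ) ≤ ((j + 1 : ℕ) : ℝ) := by positivity
  nlinarith [mul_nonneg hc0 hj0]

lemma Sm_step (m : ℕ) : Sm (m + 1) ≤ 8 * Sm m := by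
  rcases Nat.even_or_odd m with ⟨j, hj⟩ | ⟨j, hj⟩
  · -- m = 2j even
    have hm : m = 2 * j := by omega
    subst hm
    have hr1 : (2 * j + 1 + 1) / 2 + 1 = (j + 1) + 1 := by omega
    have hr2 : (2 * j + 1) / 2 + 1 = j + 1 := by omega
    unfold Sm
    rw [hr1, hr2, Finset.sum_range_succ]
    have hA : ∑ k ∈ Finset.range (j + 1), Tm (2 * j + 1) k ≤
        4 * ∑ k ∈ Finset.range (j + 1), Tm (2 * j) k := by
      rw [Finset.mul_sum]
      apply Finset.sum_le_sum
      intro k hk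
      simp only [Finset.mem_range] at hk
      exact Tm_step (2 * j) k (by omega)
    have hE : Tm (2 * j + 1) (j + 1) ≤ 4 * ∑ k ∈ Finset.range (j + 1), Tm (2 * j) k := by
      calc Tm (2 * j + 1) (j + 1) ≤ 4 * Tm (2 * j) j := Tm_extra j
        _ ≤ 4 * ∑ k ∈ Finset.range (j + 1), Tm (2 * j) k := by
            gcongr
            apply Finset.single_le_sum (f := fun k => Tm (2 * j) k)
            · intro i hi
              simp only [Finset.mem_range] at hi
              exact le_of_lt (Tm_pos (2 * j) i (by omega))
            · simp
    linarith
  · -- m = 2j+1 odd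
    have hm : m = 2 * j + 1 := by omega
    subst hm
    have hr : (2 * j + 1 + 1 + 1) / 2 + 1 = (2 * j + 1 + 1) / 2 + 1 := by omega
    unfold Sm
    rw [hr]
    have h4 : ∑ k ∈ Finset.range ((2 * j + 1 + 1) / 2 + 1), Tm (2 * j + 1 + 1) k ≤
        4 * ∑ k ∈ Finset.range ((2 * j + 1 + 1) / 2 + 1), Tm (2 * j + 1) k := by
      rw [Finset.mul_sum]
      apply Finset.sum_le_sum
      intro k hk
      simp only [Finset.mem_range] at hk
      exact Tm_step (2 * j + 1) k (by omega)
    have hpos : 0 < ∑ k ∈ Finset.range ((2 * j + 1 + 1) / 2 + 1), Tm (2 * j + 1) k := Sm_pos (2 * j + 1)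
    linarith

lemma abs_c (n : ℕ) : |c n| = Sm n / (4 * Real.sqrt 6) ^ n := by
  have hb : (0 : ℝ) < 4 * Real.sqrt 6 := by positivity
  have hS : 0 ≤ Sm n := le_of_lt (Sm_pos n)
  have hc : c n = ((-1 : ℝ) ^ n / (4 * Real.sqrt 6) ^ n) * Sm n := rfl
  rw [hc, abs_mul, abs_div, abs_pow, abs_pow, abs_neg, abs_one, one_pow,
    abs_of_pos hb, abs_of_nonneg hS, div_mul_eq_mul_div, one_mul]

theorem stmt2 (m : ℕ) : |c (m + 1)| < |c m| := by
  have hb : (0 : ℝ) < 4 * Real.sqrt 6 := by positivity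
  have h8 : (8 : ℝ) < 4 * Real.sqrt 6 := by
    have h2 : (2 : ℝ) < Real.sqrt 6 := by
      have h := Real.sqrt_lt_sqrt (by norm_num : (0:ℝ) ≤ 4) (by norm_num : (4:ℝ) < 6)
      rwa [show (4 : ℝ) = 2 ^ 2 by norm_num, Real.sqrt_sq (by norm_num : (0:ℝ) ≤ 2)] at h
    linarith
  have h1 : Sm (m + 1) < (4 * Real.sqrt 6) * Sm m := by
    calc Sm (m + 1) ≤ 8 * Sm m := Sm_step m
      _ < (4 * Real.sqrt 6) * Sm m := mul_lt_mul_of_pos_right h8 (Sm_pos m)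
  rw [abs_c, abs_c, pow_succ,
    div_lt_div_iff₀ (by positivity) (by positivity)]
  calc Sm (m + 1) * (4 * Real.sqrt 6) ^ m
      < ((4 * Real.sqrt 6) * Sm m) * (4 * Real.sqrt 6) ^ m :=
        mul_lt_mul_of_pos_right h1 (pow_pos hb m)
    _ = Sm m * ((4 * Real.sqrt 6) ^ m * (4 * Real.sqrt 6)) := by ring
end

section
/- As N → +∞, the odd-indexed coefficients satisfy the asymptotic equivalence c_{2N+1} ~ −(6√2/π^{3/2}) · cosh(π/6) · √(2N+2)/(√24)^{2N+1}; that is, the quotient −c_{2N+1} · (√24)^{2N+1} / ((6√2/π^{3/2}) · cosh(π/6) · √(2N+2)) tends to 1. -/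
open Real Finset Filter Topology

/-!
Substituting `k = N + 1 - j` and using `(m + 1).choose k * (m + 1 - k) = (m + 1) * m.choose k`,
`c (2N+1)` becomes, up to explicit factors, `∑ j, (2N+1).choose (N+j) * (π/6)^(2j) / (2j)!`.
Divided by the middle coefficient `(2N+1).choose N = centralBinom (N+1) / 2`, this is the cosh
series with weights in `[0, 1]` that tend to `1` termwise, so by dominated convergence it tends to
`cosh (π/6)`. Stirling's formula, in the form `centralBinom n ~ 4^n / √(π n)`, accounts for the
remaining factors.
-/

open Nat

theorem Stirling.stirlingSeq_two_mul_div_sq {n : ℕ} (hn : n ≠ 0) :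
    stirlingSeq (2 * n) / stirlingSeq n ^ 2 = centralBinom n * √n / 4 ^ n := by
  have hfac : ((2 * n)! : ℝ) = centralBinom n * n ! * n ! := by
    rw [centralBinom_eq_two_mul_choose, two_mul]
    exact_mod_cast (Nat.add_choose_mul_factorial_mul_factorial n n).symm
  have hsqrt : √(2 * ((2 * n : ℕ) : ℝ)) = 2 * √n := by
    rw [show (2 : ℝ) * ((2 * n : ℕ) : ℝ) = 2 ^ 2 * n by push_cast; ring, sqrt_mul' _ n.cast_nonneg,
      sqrt_sq zero_le_two]
  have hpow : (((2 * n : ℕ) : ℝ) / exp 1) ^ (2 * n) = 4 ^ n * ((n / exp 1) ^ n) ^ 2 := by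
    rw [← pow_mul, mul_comm n 2, show (4 : ℝ) = 2 ^ 2 by norm_num, ← pow_mul, ← mul_pow]
    push_cast
    ring
  have hn' : (0 : ℝ) < n := by positivity
  simp only [stirlingSeq]
  rw [hfac, hsqrt, hpow]
  field_simp
  rw [sq_sqrt (by positivity), sq_sqrt hn'.le]
  ring

theorem tendsto_centralBinom_mul_sqrt_div_four_pow :
    Tendsto (fun n : ℕ => (centralBinom n : ℝ) * √n / 4 ^ n) atTop (𝓝 (1 / √π)) := by
  have hπ : √π ≠ 0 := (sqrt_pos.mpr pi_pos).ne'
  have h := (Stirling.tendsto_stirlingSeq_sqrt_pi.comp (tendsto_id.const_mul_atTop' two_pos)).div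
    (Stirling.tendsto_stirlingSeq_sqrt_pi.pow 2) (pow_ne_zero 2 hπ)
  rw [show √π / √π ^ 2 = 1 / √π by field_simp] at h
  exact h.congr' <| (eventually_ne_atTop 0).mono fun n hn => Stirling.stirlingSeq_two_mul_div_sq hn

theorem Nat.centralBinom_succ_eq_two_mul_choose (n : ℕ) :
    centralBinom (n + 1) = 2 * (2 * n + 1).choose n := by
  rw [centralBinom_eq_two_mul_choose, show 2 * (n + 1) = 2 * n + 1 + 1 by ring, choose_succ_succ,
    choose_symm_half, ← two_mul]

theorem tendsto_choose_add_div_choose (j : ℕ) :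
    Tendsto (fun N : ℕ => ((2 * N + 1).choose (N + j) : ℝ) / (2 * N + 1).choose N) atTop (𝓝 1) := by
  induction j with
  | zero =>
    refine tendsto_const_nhds.congr fun N => (div_self ?_).symm
    exact_mod_cast (Nat.choose_pos (by omega)).ne'
  | succ j ih =>
    have hstep := ih.mul (tendsto_add_mul_div_add_mul_atTop_nhds (1 - j : ℝ) (j + 1) 1 one_ne_zero)
    rw [div_one, mul_one] at hstep
    refine hstep.congr' ?_
    filter_upwards [eventually_ge_atTop j] with N hN
    have hchoose : ((2 * N + 1).choose (N + (j + 1)) : ℝ) * (N + j + 1)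
        = (2 * N + 1).choose (N + j) * (1 - j + N) := by
      have h := Nat.choose_succ_right_eq (2 * N + 1) (N + j)
      rw [show 2 * N + 1 - (N + j) = N + 1 - j by omega] at h
      rw [← add_assoc, show (1 : ℝ) - j + N = ((N + 1 - j : ℕ) : ℝ) by
        rw [Nat.cast_sub (by omega)]; push_cast; ring]
      exact_mod_cast h
    have hC : ((2 * N + 1).choose N : ℝ) ≠ 0 := by exact_mod_cast (Nat.choose_pos (by omega)).ne'
    field_simp
    linarith

theorem tendsto_tsum_mul_of_tendsto_one {α β : Type*} {l : Filter α} {r : α → β → ℝ} {a : β → ℝ}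
    (ha : Summable a) (hr : ∀ j, Tendsto (r · j) l (𝓝 1)) (hbound : ∀ᶠ n in l, ∀ j, |r n j| ≤ 1) :
    Tendsto (fun n => ∑' j, r n j * a j) l (𝓝 (∑' j, a j)) := by
  refine tendsto_tsum_of_dominated_convergence ha.abs (fun j => ?_) ?_
  · simpa using (hr j).mul_const (a j)
  · filter_upwards [hbound] with n hn j
    rw [norm_mul, norm_eq_abs, norm_eq_abs]
    exact mul_le_of_le_one_left (abs_nonneg _) (hn j)

theorem tendsto_sum_choose_mul_cosh_series_div_choose (x : ℝ) :
    Tendsto (fun N : ℕ => (∑ j ∈ range (N + 2),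
        ((2 * N + 1).choose (N + j) : ℝ) * (x ^ (2 * j) / (2 * j)!)) / (2 * N + 1).choose N)
      atTop (𝓝 (cosh x)) := by
  rw [cosh_eq_tsum]
  refine (tendsto_tsum_mul_of_tendsto_one (hasSum_cosh x).summable tendsto_choose_add_div_choose
    (Eventually.of_forall fun N j => ?_)).congr fun N => ?_
  · have hC : (0 : ℝ) < (2 * N + 1).choose N := by exact_mod_cast Nat.choose_pos (by omega)
    rw [abs_of_nonneg (by positivity), div_le_one hC]
    exact_mod_cast (choose_le_middle (N + j) (2 * N + 1)).trans_eq
      (by rw [show (2 * N + 1) / 2 = N by omega])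
  · rw [sum_div, tsum_eq_sum fun j hj => ?_]
    · exact sum_congr rfl fun j _ => by ring
    · rw [choose_eq_zero_of_lt (by simp at hj; omega)]
      simp

theorem c_two_mul_add_one (N : ℕ) :
    c (2 * N + 1) = -((2 * N + 2) / ((4 * √6) ^ (2 * N + 1) * (π / 6))) *
      ∑ j ∈ range (N + 2), ((2 * N + 1).choose (N + j) : ℝ) * ((π / 6) ^ (2 * j) / (2 * j)!) := by
  rw [c, show (2 * N + 1 + 1) / 2 + 1 = N + 2 by omega, ← sum_range_reflect, mul_sum, mul_sum,
    Odd.neg_one_pow ⟨N, rfl⟩]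
  refine sum_congr rfl fun j hj => ?_
  have hj : j ≤ N + 1 := Nat.lt_succ_iff.mp (mem_range.mp hj)
  rw [show N + 2 - 1 - j = N + 1 - j by omega,
    show 2 * N + 1 + 1 - 2 * (N + 1 - j) = 2 * j by omega]
  have hchoose : ((2 * N + 1 + 1).choose (N + 1 - j) : ℝ) * ((2 * N + 1 + 1 - (N + 1 - j) : ℕ) : ℝ)
      = (2 * N + 2) * (2 * N + 1).choose (N + j) := by
    rw [← Nat.choose_symm_of_eq_add (by omega : 2 * N + 1 = (N + 1 - j) + (N + j)),
      mul_comm (2 * N + 2 : ℝ)]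
    exact_mod_cast (Nat.choose_mul_succ_eq (2 * N + 1) (N + 1 - j)).symm
  have hzpow : (π / 6) ^ (((2 * N + 1 : ℕ) : ℤ) - 2 * ((N + 1 - j : ℕ) : ℤ))
      = (π / 6) ^ (2 * j) / (π / 6) := by
    rw [show ((2 * N + 1 : ℕ) : ℤ) - 2 * ((N + 1 - j : ℕ) : ℤ) = ((2 * j : ℕ) : ℤ) - 1 by omega,
      zpow_sub₀ (by positivity), zpow_one, zpow_natCast]
  rw [hzpow, hchoose]
  ring

theorem stmt17 :
    Tendsto (fun N : ℕ => -(c (2 * N + 1)) * Real.sqrt 24 ^ (2 * N + 1) /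
        (6 * Real.sqrt 2 / π ^ ((3 : ℝ) / 2) * Real.cosh (π / 6) * Real.sqrt (2 * N + 2)))
      atTop (𝓝 1) := by
  have hlim := ((tendsto_centralBinom_mul_sqrt_div_four_pow.comp (tendsto_add_atTop_nat 1)).mul
    (tendsto_sum_choose_mul_cosh_series_div_choose (π / 6))).mul_const (√π / cosh (π / 6))
  rw [show 1 / √π * cosh (π / 6) * (√π / cosh (π / 6)) = 1 by
    field_simp [(sqrt_pos.mpr pi_pos).ne', (cosh_pos (π / 6)).ne']] at hlim
  refine hlim.congr fun N => ?_
  have h24 : √24 = 2 * √6 := by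
    rw [show (24 : ℝ) = 2 ^ 2 * 6 by norm_num, sqrt_mul' _ (by norm_num), sqrt_sq zero_le_two]
  have hpi : π ^ ((3 : ℝ) / 2) = π * √π := by
    rw [show (3 : ℝ) / 2 = 1 + 1 / 2 by norm_num, rpow_add pi_pos, rpow_one, sqrt_eq_rpow]
  have h2N : √(2 * N + 2) = √2 * √(N + 1) := by
    rw [← sqrt_mul zero_le_two]; ring_nf
  have hC : (0 : ℝ) < (2 * N + 1).choose N := by exact_mod_cast Nat.choose_pos (by omega)
  simp only [Function.comp_apply, centralBinom_succ_eq_two_mul_choose, c_two_mul_add_one, h24,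
    hpi, h2N]
  push_cast
  field_simp
  rw [sq_sqrt (by positivity), sq_sqrt zero_le_two, show (4 : ℝ) * √6 = 2 * (2 * √6) by ring,
    mul_pow, show (4 : ℝ) ^ (N + 1) = 2 * 2 ^ (2 * N + 1) by rw [pow_succ, pow_succ, pow_mul]; ring]
  ring
end
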